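/- For all a, c ∈ g one has Σ_{i∈I} [[a, b_i], [b_i^∨, c]] = (1/2) [a, c] (the triangle relation in the category of g-modules). -/

import Mathlib

open scoped BigOperators
open LieAlgebra LinearMap Module

section Aux

variable {g : Type*} [LieRing g] [LieAlgebra ℂ g] [FiniteDimensional ℂ g]
    {I : Type*} [Fintype I] [DecidableEq I] (b : Basis I ℂ g) (bv : I → g)
    (hdual : ∀ i j, killingForm ℂ g (bv i) (b j) = if i = j then 1 else 0)

include hdual

omit [FiniteDimensional ℂ g] in
lemma exp1 (y : g) : ∑ j, killingForm ℂ g (bv j) y • b j = y := by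
  have h : (∑ j, (LinearMap.toSpanSingleton ℂ g (b j)) ∘ₗ (killingForm ℂ g (bv j)))
      = LinearMap.id := by
    apply b.ext
    intro k
    simp [LinearMap.sum_apply, hdual, ite_smul]
  simpa [LinearMap.sum_apply] using LinearMap.congr_fun h y

omit [FiniteDimensional ℂ g] in
lemma bv_li : LinearIndependent ℂ bv := by
  rw [Fintype.linearIndependent_iff]
  intro t ht j
  have := congrArg (fun z => killingForm ℂ g z (b j)) ht
  simpa [map_sum, hdual, mul_ite] using this

lemma exp2 (y : g) : ∑ j, killingForm ℂ g y (b j) • bv j = y := by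
  cases isEmpty_or_nonempty I with
  | inl h =>
    have h0 := exp1 b bv hdual y
    simp only [Finset.univ_eq_empty, Finset.sum_empty] at h0 ⊢
    exact h0
  | inr h =>
    have card : Fintype.card I = Module.finrank ℂ g := (Module.finrank_eq_card_basis b).symm
    set bv' : Basis I ℂ g := basisOfLinearIndependentOfCardEqFinrank (bv_li b bv hdual) card
      with hbv'def
    have hbv' : ⇑bv' = bv := coe_basisOfLinearIndependentOfCardEqFinrank _ _
    have h : (∑ j, (LinearMap.toSpanSingleton ℂ g (bv j)) ∘ₗ ((killingForm ℂ g).flip (b j)))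
        = LinearMap.id := by
      apply bv'.ext
      intro k
      simp [LinearMap.sum_apply, hbv', hdual, ite_smul]
    simpa [LinearMap.sum_apply] using LinearMap.congr_fun h y

end Aux

section Aux2

variable {g : Type*} [LieRing g] [LieAlgebra ℂ g] [FiniteDimensional ℂ g]
    {I : Type*} [Fintype I] [DecidableEq I] (b : Basis I ℂ g) (bv : I → g)
    (hdual : ∀ i j, killingForm ℂ g (bv i) (b j) = if i = j then 1 else 0)

include hdual

set_option linter.unusedSectionVars false

lemma inv1 (B : g →ₗ[ℂ] g →ₗ[ℂ] g) (x : g) :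
    ∑ i, B ⁅x, b i⁆ (bv i) = -∑ i, B (b i) ⁅x, bv i⁆ := by
  have h1 : ∑ i, B ⁅x, b i⁆ (bv i)
      = ∑ i, ∑ j, killingForm ℂ g (bv j) ⁅x, b i⁆ • B (b j) (bv i) := by
    refine Finset.sum_congr rfl fun i _ => ?_
    conv_lhs => rw [← exp1 b bv hdual ⁅x, b i⁆]
    simp [map_sum, LinearMap.sum_apply]
  have h2 : ∑ i, B (b i) ⁅x, bv i⁆
      = ∑ i, ∑ j, killingForm ℂ g ⁅x, bv i⁆ (b j) • B (b i) (bv j) := by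
    refine Finset.sum_congr rfl fun i _ => ?_
    conv_lhs => rw [← exp2 b bv hdual ⁅x, bv i⁆]
    simp [map_sum, LinearMap.sum_apply]
  rw [h1, h2]
  simp only [← Finset.sum_neg_distrib, ← neg_smul]
  rw [Finset.sum_comm]
  refine Finset.sum_congr rfl fun p _ => Finset.sum_congr rfl fun q _ => ?_
  congr 1
  rw [LieModule.traceForm_apply_lie_apply' ℂ g g x (bv p) (b q), neg_neg]

lemma inv2 (B : g →ₗ[ℂ] g →ₗ[ℂ] g) :
    ∑ i, B (b i) (bv i) = ∑ i, B (bv i) (b i) := by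
  have h1 : ∑ i, B (b i) (bv i)
      = ∑ i, ∑ j, killingForm ℂ g (bv j) (bv i) • B (b i) (b j) := by
    refine Finset.sum_congr rfl fun i _ => ?_
    conv_lhs => rw [← exp1 b bv hdual (bv i)]
    simp [map_sum, LinearMap.sum_apply]
  have h2 : ∑ i, B (bv i) (b i)
      = ∑ i, ∑ j, killingForm ℂ g (bv j) (bv i) • B (b j) (b i) := by
    refine Finset.sum_congr rfl fun i _ => ?_
    conv_lhs => rw [← exp1 b bv hdual (bv i)]
    simp [map_sum, LinearMap.sum_apply]
  rw [h1, h2, Finset.sum_comm]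
  refine Finset.sum_congr rfl fun p _ => Finset.sum_congr rfl fun q _ => ?_
  congr 1
  exact LieModule.traceForm_comm ℂ g g (bv p) (bv q)

end Aux2

section Aux3

variable {g : Type*} [LieRing g] [LieAlgebra ℂ g] [FiniteDimensional ℂ g]
    [LieAlgebra.IsSimple ℂ g]
    {I : Type*} [Fintype I] [DecidableEq I] (b : Basis I ℂ g) (bv : I → g)
    (hdual : ∀ i j, killingForm ℂ g (bv i) (b j) = if i = j then 1 else 0)

set_option linter.unusedSectionVars false

/-- bilinear bracket -/
noncomputable abbrev br2 : g →ₗ[ℂ] g →ₗ[ℂ] g := 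
    LinearMap.mk₂ ℂ (fun u v => ⁅u, v⁆) add_lie smul_lie lie_add lie_smul

@[simp] lemma br2_apply (u v : g) : br2 u v = ⁅u, v⁆ := rfl

include hdual

lemma casimir_id (y : g) : ∑ i, ⁅b i, ⁅bv i, y⁆⁆ = y := by
  set Ω : Module.End ℂ g := ∑ i, (ad ℂ g (b i)) ∘ₗ (ad ℂ g (bv i)) with hΩdef
  have hΩ : ∀ z : g, Ω z = ∑ i, ⁅b i, ⁅bv i, z⁆⁆ := by
    intro z
    simp [hΩdef, LinearMap.sum_apply]
  -- Ω is a module endomorphism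
  have hcomm : ∀ x z : g, Ω ⁅x, z⁆ = ⁅x, Ω z⁆ := by
    intro x z
    have jac : ∀ i : I, ⁅b i, ⁅bv i, ⁅x, z⁆⁆⁆ =
        ⁅b i, ⁅⁅bv i, x⁆, z⁆⁆ + (⁅⁅b i, x⁆, ⁅bv i, z⁆⁆ + ⁅x, ⁅b i, ⁅bv i, z⁆⁆⁆) := by
      intro i
      rw [leibniz_lie (bv i) x z, lie_add, leibniz_lie (b i) x ⁅bv i, z⁆]
    have key : ∑ i, ⁅⁅b i, x⁆, ⁅bv i, z⁆⁆ = -∑ i, ⁅b i, ⁅⁅bv i, x⁆, z⁆⁆ := by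
      have B1 := inv1 b bv hdual ((br2 (g := g)).compl₂ ((br2 (g := g)).flip z)) x
      simp only [LinearMap.compl₂_apply, LinearMap.flip_apply, br2_apply] at B1
      -- B1 : ∑ i, ⁅⁅x, b i⁆, ⁅bv i, z⁆⁆ = -∑ i, ⁅b i, ⁅⁅x, bv i⁆, z⁆⁆
      calc ∑ i, ⁅⁅b i, x⁆, ⁅bv i, z⁆⁆
          = -∑ i, ⁅⁅x, b i⁆, ⁅bv i, z⁆⁆ := by
            rw [← Finset.sum_neg_distrib]
            refine Finset.sum_congr rfl fun i _ => ?_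
            rw [show ⁅b i, x⁆ = -⁅x, b i⁆ by rw [lie_skew], neg_lie]
        _ = ∑ i, ⁅b i, ⁅⁅x, bv i⁆, z⁆⁆ := by rw [B1, neg_neg]
        _ = -∑ i, ⁅b i, ⁅⁅bv i, x⁆, z⁆⁆ := by
            rw [← Finset.sum_neg_distrib]
            refine Finset.sum_congr rfl fun i _ => ?_
            rw [show ⁅x, bv i⁆ = -⁅bv i, x⁆ by rw [lie_skew], neg_lie, lie_neg]
    calc Ω ⁅x, z⁆ = ∑ i, ⁅b i, ⁅bv i, ⁅x, z⁆⁆⁆ := hΩ _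
      _ = ∑ i, (⁅b i, ⁅⁅bv i, x⁆, z⁆⁆ + (⁅⁅b i, x⁆, ⁅bv i, z⁆⁆ + ⁅x, ⁅b i, ⁅bv i, z⁆⁆⁆)) :=
          Finset.sum_congr rfl fun i _ => jac i
      _ = ∑ i, ⁅b i, ⁅⁅bv i, x⁆, z⁆⁆ + (∑ i, ⁅⁅b i, x⁆, ⁅bv i, z⁆⁆
            + ∑ i, ⁅x, ⁅b i, ⁅bv i, z⁆⁆⁆) := by rw [Finset.sum_add_distrib,
              Finset.sum_add_distrib]
      _ = ∑ i, ⁅x, ⁅b i, ⁅bv i, z⁆⁆⁆ := by rw [key]; abel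
      _ = ⁅x, Ω z⁆ := by
            rw [hΩ z]
            exact (map_sum (ad ℂ g x) (fun i => ⁅b i, ⁅bv i, z⁆⁆) Finset.univ).symm
  -- g is nontrivial
  have hnt : Nontrivial g := by
    by_contra h
    rw [not_nontrivial_iff_subsingleton] at h
    exact LieAlgebra.IsSimple.non_abelian (R := ℂ) (L := g)
      ⟨fun x y => Subsingleton.elim _ _⟩
  -- Schur
  obtain ⟨μ, hμ⟩ := Module.End.exists_eigenvalue Ω
  let E : LieIdeal ℂ g :=
    { Module.End.eigenspace Ω μ with
      lie_mem := by
        intro x m hm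
        have hm' : Ω m = μ • m := Module.End.mem_eigenspace_iff.mp hm
        refine Module.End.mem_eigenspace_iff.mpr ?_
        rw [hcomm, hm', lie_smul] }
  have hEbot : E ≠ ⊥ := by
    intro h
    rw [Module.End.hasEigenvalue_iff] at hμ
    apply hμ
    have := congrArg (fun J : LieIdeal ℂ g => LieSubmodule.toSubmodule J) h
    simpa [E] using this
  have hEtop : E = ⊤ := (LieAlgebra.IsSimple.eq_bot_or_eq_top E).resolve_left hEbot
  have heig : ∀ z : g, Ω z = μ • z := by
    intro z
    have hz : z ∈ E := hEtop ▸ LieSubmodule.mem_top _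
    exact Module.End.mem_eigenspace_iff.mp hz
  -- trace computation
  have htr1 : LinearMap.trace ℂ g Ω = (Fintype.card I : ℂ) := by
    rw [hΩdef, map_sum]
    have : ∀ i : I, LinearMap.trace ℂ g ((ad ℂ g (b i)) ∘ₗ (ad ℂ g (bv i))) = 1 := by
      intro i
      rw [← killingForm_apply_apply, LieModule.traceForm_comm, hdual]
      simp
    simp [this]
  have htr2 : LinearMap.trace ℂ g Ω = μ * (Fintype.card I : ℂ) := by
    have : Ω = μ • LinearMap.id := LinearMap.ext fun z => heig z
    rw [this, map_smul, LinearMap.trace_id, Module.finrank_eq_card_basis b]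
    simp [mul_comm]
  have hcard : (Fintype.card I : ℂ) ≠ 0 := by
    have h1 : 0 < Fintype.card I := by
      rw [← Module.finrank_eq_card_basis b]
      exact Module.finrank_pos
    exact_mod_cast h1.ne'
  have hμ1 : μ = 1 := by
    have h2 : μ * (Fintype.card I : ℂ) = 1 * (Fintype.card I : ℂ) :=
      (htr2.symm.trans htr1).trans (one_mul _).symm
    exact mul_right_cancel₀ hcard h2
  rw [← hΩ y, heig y, hμ1, one_smul]

end Aux3


/-- The triangle relation in the category of `g`-modules: for a finite-dimensional
complex simple Lie algebra `g` with basis `(b i)` and dual basis `(bv i)` with respect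
to the Killing form, for all `a c ∈ g` one has
`∑ i, [[a, b i], [bv i, c]] = (1/2) [a, c]`. -/
theorem triangle_relation (g : Type*) [LieRing g] [LieAlgebra ℂ g]
    [FiniteDimensional ℂ g] [LieAlgebra.IsSimple ℂ g]
    (I : Type*) [Fintype I] [DecidableEq I] (b : Basis I ℂ g) (bv : I → g)
    (hdual : ∀ i j, killingForm ℂ g (bv i) (b j) = if i = j then 1 else 0)
    (a c : g) :
    ∑ i, ⁅⁅a, b i⁆, ⁅bv i, c⁆⁆ = (1/2 : ℂ) • ⁅a, c⁆ := by
  have hI := casimir_id b bv hdual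
  have jac : ∀ i : I, ⁅b i, ⁅bv i, ⁅a, c⁆⁆⁆ =
      (⁅⁅b i, ⁅bv i, a⁆⁆, c⁆ + ⁅⁅bv i, a⁆, ⁅b i, c⁆⁆)
        + (⁅⁅b i, a⁆, ⁅bv i, c⁆⁆ + ⁅a, ⁅b i, ⁅bv i, c⁆⁆⁆) := by
    intro i
    rw [leibniz_lie (bv i) a c, lie_add, leibniz_lie (b i) ⁅bv i, a⁆ c,
      leibniz_lie (b i) a ⁅bv i, c⁆]
  have hsum : ⁅a, c⁆ = (⁅a, c⁆ + ∑ i, ⁅⁅bv i, a⁆, ⁅b i, c⁆⁆)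
      + (∑ i, ⁅⁅b i, a⁆, ⁅bv i, c⁆⁆ + ⁅a, c⁆) := by
    conv_lhs => rw [← hI ⁅a, c⁆]
    calc ∑ i, ⁅b i, ⁅bv i, ⁅a, c⁆⁆⁆
        = ∑ i, ((⁅⁅b i, ⁅bv i, a⁆⁆, c⁆ + ⁅⁅bv i, a⁆, ⁅b i, c⁆⁆)
          + (⁅⁅b i, a⁆, ⁅bv i, c⁆⁆ + ⁅a, ⁅b i, ⁅bv i, c⁆⁆⁆)) :=
          Finset.sum_congr rfl fun i _ => jac i
      _ = (∑ i, ⁅⁅b i, ⁅bv i, a⁆⁆, c⁆ + ∑ i, ⁅⁅bv i, a⁆, ⁅b i, c⁆⁆)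
          + (∑ i, ⁅⁅b i, a⁆, ⁅bv i, c⁆⁆ + ∑ i, ⁅a, ⁅b i, ⁅bv i, c⁆⁆⁆) := by
          rw [Finset.sum_add_distrib, Finset.sum_add_distrib, Finset.sum_add_distrib]
      _ = (⁅a, c⁆ + ∑ i, ⁅⁅bv i, a⁆, ⁅b i, c⁆⁆)
          + (∑ i, ⁅⁅b i, a⁆, ⁅bv i, c⁆⁆ + ⁅a, c⁆) := by
          congr 1
          · congr 1
            rw [show ∑ i, ⁅⁅b i, ⁅bv i, a⁆⁆, c⁆ = ⁅∑ i, ⁅b i, ⁅bv i, a⁆⁆, c⁆ from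
              (map_sum ((br2 (g := g)).flip c) (fun i => ⁅b i, ⁅bv i, a⁆⁆) Finset.univ).symm,
              hI a]
          · congr 1
            rw [show ∑ i, ⁅a, ⁅b i, ⁅bv i, c⁆⁆⁆ = ⁅a, ∑ i, ⁅b i, ⁅bv i, c⁆⁆⁆ from
              (map_sum (ad ℂ g a) (fun i => ⁅b i, ⁅bv i, c⁆⁆) Finset.univ).symm, hI c]
  have hswap : ∑ i, ⁅⁅bv i, a⁆, ⁅b i, c⁆⁆ = ∑ i, ⁅⁅b i, a⁆, ⁅bv i, c⁆⁆ := by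
    have := inv2 b bv hdual
      (((br2 (g := g)).compl₂ ((br2 (g := g)).flip c)).comp ((br2 (g := g)).flip a))
    simp only [LinearMap.comp_apply, LinearMap.compl₂_apply, LinearMap.flip_apply,
      br2_apply] at this
    exact this.symm
  have hneg : ∑ i, ⁅⁅a, b i⁆, ⁅bv i, c⁆⁆ = -∑ i, ⁅⁅b i, a⁆, ⁅bv i, c⁆⁆ := by
    rw [← Finset.sum_neg_distrib]
    refine Finset.sum_congr rfl fun i _ => ?_
    rw [show ⁅a, b i⁆ = -⁅b i, a⁆ by rw [lie_skew], neg_lie]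
  set S : g := ∑ i, ⁅⁅b i, a⁆, ⁅bv i, c⁆⁆ with hS
  rw [hswap] at hsum
  -- hsum : ⁅a,c⁆ = (⁅a,c⁆ + S) + (S + ⁅a,c⁆)
  have h2 : S + S = -⁅a, c⁆ := by
    have := hsum
    abel_nf at this ⊢
    linear_combination (norm := abel_nf) -this
  rw [hneg]
  have hfin : ⁅a, c⁆ = (-S) + (-S) := by rw [← neg_add, h2, neg_neg]
  rw [hfin]
  module
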